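/- Let (K, d^K) be a boundedly-compact metric space (every closed bounded subset is compact) and fix ρ ∈ K. For r > 0 let K^{(r)} denote the closure of the open ball B(ρ,r) = {x : d^K(ρ,x) < r}. Then the map r ↦ K^{(r)} from (0,∞) to the nonempty compact subsets of K is left-continuous with right-hand limits with respect to the Hausdorff distance in K; moreover, its right-hand limit at r is the closed ball D(ρ,r) = {x : d^K(ρ,x) ≤ r}. That is, hausdorffDist(K^{(s)}, K^{(r)}) → 0 as s ↑ r, and hausdorffDist(K^{(s)}, D(ρ,r)) → 0 as s ↓ r. -/

import Mathlib

open Filter Set Metric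
open scoped Topology

/-!
Both one-sided limits reduce to: `A ⊆ B ⊆ thickening ε A` forces `hausdorffDist A B ≤ ε`.
From the left, a finite `ε`-net of the totally bounded ball `B(ρ, r)` already lies in `B(ρ, s)`
for `s` close to `r`. From the right, the closed balls `D(ρ, s)` are compact and decrease to
`D(ρ, r)`, so they eventually enter its open `ε`-thickening.
-/

section HausdorffDist

variable {X : Type*} [PseudoMetricSpace X]

theorem hausdorffDist_le_of_subset_of_subset_thickening {A B : Set X} {ε : ℝ} (hε : 0 ≤ ε)
    (hAB : A ⊆ B) (hBA : B ⊆ thickening ε A) : hausdorffDist A B ≤ ε := by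
  refine hausdorffDist_le_of_mem_dist hε (fun x hx => ⟨x, hAB hx, by simpa using hε⟩) ?_
  intro x hx
  obtain ⟨y, hy, hxy⟩ := mem_thickening_iff.1 (hBA hx)
  exact ⟨y, hy, hxy.le⟩

theorem tendsto_hausdorffDist_zero_of_subset_of_subset_thickening {ι : Type*} {l : Filter ι}
    {A B : ι → Set X} (hAB : ∀ᶠ i in l, A i ⊆ B i)
    (hBA : ∀ ε > 0, ∀ᶠ i in l, B i ⊆ thickening ε (A i)) :
    Tendsto (fun i => hausdorffDist (A i) (B i)) l (𝓝 0) := by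
  refine tendsto_order.2 ⟨fun a ha => .of_forall fun i => ha.trans_le hausdorffDist_nonneg,
    fun ε hε => ?_⟩
  filter_upwards [hAB, hBA (ε / 2) (half_pos hε)] with i hi hi'
  exact (hausdorffDist_le_of_subset_of_subset_thickening (half_pos hε).le hi hi').trans_lt
    (half_lt_self hε)

theorem TotallyBounded.eventually_subset_thickening {ι : Type*} {l : Filter ι} {A : ι → Set X}
    {B : Set X} (hB : TotallyBounded B) (hmem : ∀ y ∈ B, ∀ᶠ i in l, y ∈ A i) {ε : ℝ}
    (hε : 0 < ε) : ∀ᶠ i in l, B ⊆ thickening ε (A i) := by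
  obtain ⟨t, htB, ht, hBt⟩ := finite_approx_of_totallyBounded hB ε hε
  filter_upwards [(eventually_all_finite ht).2 fun y hy => hmem y (htB hy)] with i hi
  rw [thickening_eq_biUnion_ball]
  exact hBt.trans (biUnion_subset_biUnion_left hi)

end HausdorffDist

theorem eventually_closedBall_subset_of_isOpen {K : Type*} [PseudoMetricSpace K] [ProperSpace K]
    (ρ : K) (r : ℝ) {U : Set K} (hU : IsOpen U)
    (hrU : closedBall ρ r ⊆ U) : ∀ᶠ s in 𝓝[>] r, closedBall ρ s ⊆ U := by
  have : Nonempty (Ioi r) := ⟨⟨r + 1, by simp⟩⟩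
  obtain ⟨⟨s₀, hs₀⟩, hs₀U⟩ := exists_subset_nhds_of_isCompact'
    (V := fun s : Ioi r => closedBall ρ s)
    (Monotone.directed_ge fun _ _ h => closedBall_subset_closedBall h)
    (fun s => isCompact_closedBall ρ s) (fun _ => isClosed_closedBall)
    fun x hx => hU.mem_nhds <| hrU <| biInter_gt_closedBall ρ r ▸
      mem_iInter₂.2 fun s hs => mem_iInter.1 hx ⟨s, hs⟩
  filter_upwards [Ioc_mem_nhdsGT hs₀] with s hs
  exact (closedBall_subset_closedBall hs.2).trans hs₀U

theorem stmt6 {K : Type*} [MetricSpace K] [ProperSpace K] (ρ : K) (r : ℝ) :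
    Tendsto (fun s => hausdorffDist (closure (ball ρ s)) (closure (ball ρ r)))
      (nhdsWithin r (Set.Iio r)) (𝓝 0) ∧
    Tendsto (fun s => hausdorffDist (closure (ball ρ s)) (closedBall ρ r))
      (nhdsWithin r (Set.Ioi r)) (𝓝 0) := by
  constructor
  · simp only [hausdorffDist_closure]
    refine tendsto_hausdorffDist_zero_of_subset_of_subset_thickening ?_ fun ε hε => ?_
    · filter_upwards [self_mem_nhdsWithin] with s hs using ball_subset_ball (le_of_lt hs)
    · refine ((isCompact_closedBall ρ r).totallyBounded.subset ball_subset_closedBall)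
        |>.eventually_subset_thickening (fun y hy => ?_) hε
      exact (eventually_gt_nhds (mem_ball.1 hy)).filter_mono nhdsWithin_le_nhds
  · simp only [hausdorffDist_closure₁, hausdorffDist_comm (s := ball ρ _)]
    refine tendsto_hausdorffDist_zero_of_subset_of_subset_thickening ?_ fun ε hε => ?_
    · filter_upwards [self_mem_nhdsWithin] with s hs using closedBall_subset_ball hs
    · filter_upwards [eventually_closedBall_subset_of_isOpen ρ r isOpen_thickening
        (self_subset_thickening hε _)] with s hs
      exact ball_subset_closedBall.trans hs
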